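/- For every pair of indices i < j there exists a positive integer constant R_{ij}, depending only on (v_1,...,v_k) and (p_1,...,p_k), with R_{ij}/p_i ∈ ℤ and R_{ij}/p_j ∈ ℤ, such that for every capacity B, every demand bounds n ∈ ℕ^k, every past counts y ∈ ℕ^k, and every optimal solution x* of the offline problem, at least one of the following holds: (i) x*_i > n_i − R_{ij}/p_i; (ii) x*_j < R_{ij}/p_j. -/
import Mathlib


open Finset

/-- PMF of a Binomial(m, p) random variable at value `s`. -/
noncomputable def binomPMF (p : ℝ) (m s : ℕ) : ℝ :=
  (m.choose s : ℝ) * p ^ s * (1 - p) ^ (m - s)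

/-- Expectation of `g` applied to a vector of independent binomial random variables,
where coordinate `j` is Binomial(x j, p j). -/
noncomputable def jointExp {k : ℕ} (p : Fin k → ℝ) (x : Fin k → ℕ)
    (g : (Fin k → ℕ) → ℝ) : ℝ :=
  ∑ a ∈ Fintype.piFinset (fun j => Finset.range (x j + 1)),
    (∏ j, binomPMF (p j) (x j) (a j)) * g a

open Classical in
/-- Probability of the event `E` for a vector of independent binomial random
variables, coordinate `j` being Binomial(x j, p j). -/
noncomputable def jointProb {k : ℕ} (p : Fin k → ℝ) (x : Fin k → ℕ)
    (E : (Fin k → ℕ) → Prop) : ℝ :=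
  jointExp p x (fun a => if E a then 1 else 0)

/-- P[S(x) ≥ B], where S(x) = Σ_j X_{j, x_j} is Poisson binomial. -/
noncomputable def showTail {k : ℕ} (p : Fin k → ℝ) (x : Fin k → ℕ) (B : ℕ) : ℝ :=
  jointProb p x (fun a => B ≤ ∑ j, a j)

/-- Expected compensation V_B(x) = E[(S(x) − B)^+]. -/
noncomputable def VB {k : ℕ} (p : Fin k → ℝ) (B : ℕ) (x : Fin k → ℕ) : ℝ :=
  jointExp p x (fun a => max ((∑ j, a j : ℝ) - B) 0)

/-- Objective of the offline problem with past accepted counts `y`: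
f(x) = Σ_j v_j (y_j + x_j) − V_B(y + x). -/
noncomputable def objFn {k : ℕ} (v p : Fin k → ℝ) (B : ℕ) (y x : Fin k → ℕ) : ℝ :=
  ∑ j, v j * ((y j : ℝ) + (x j : ℝ)) - VB p B (fun j => y j + x j)

/-- Feasibility for the offline problem with demand bounds `n`. -/
def Feasible {k : ℕ} (n x : Fin k → ℕ) : Prop := ∀ j, x j ≤ n j

/-- `x` is locally optimal at `j`: `x j` is the largest element of the argmax,
over `z ∈ {0,…,n j}`, of `z · v_j − V_B(y + x + (z − x_j)·e_j)`. -/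
def LocallyOpt {k : ℕ} (v p : Fin k → ℝ) (B : ℕ) (n y : Fin k → ℕ)
    (x : Fin k → ℕ) (j : Fin k) : Prop :=
  ∀ z ≤ n j,
    ((z : ℝ) * v j - VB p B (fun i => y i + Function.update x j z i)
        ≤ (x j : ℝ) * v j - VB p B (fun i => y i + x i)) ∧
    (x j < z →
      (z : ℝ) * v j - VB p B (fun i => y i + Function.update x j z i)
        < (x j : ℝ) * v j - VB p B (fun i => y i + x i))

lemma binomPMF_nonneg {p : ℝ} (h0 : 0 ≤ p) (h1 : p ≤ 1) (m s : ℕ) :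
    0 ≤ binomPMF p m s := by
  unfold binomPMF
  have : (0:ℝ) ≤ 1 - p := by linarith
  positivity

lemma binomPMF_pos {p : ℝ} (h0 : 0 < p) (h1 : p < 1) {m s : ℕ} (hs : s ≤ m) :
    0 < binomPMF p m s := by
  unfold binomPMF
  have h2 : (0:ℝ) < 1 - p := by linarith
  have h3 : 0 < m.choose s := Nat.choose_pos hs
  positivity

lemma binomPMF_eq_zero {p : ℝ} {m s : ℕ} (hs : m < s) : binomPMF p m s = 0 := by
  unfold binomPMF
  rw [Nat.choose_eq_zero_of_lt hs]; simp

lemma binomPMF_sum (p : ℝ) (m : ℕ) :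
    ∑ s ∈ range (m + 1), binomPMF p m s = 1 := by
  have h := add_pow p (1 - p) m
  simp only [add_sub_cancel, one_pow] at h
  rw [h]
  apply Finset.sum_congr rfl
  intro s _
  unfold binomPMF
  ring

lemma binomPMF_pascal (p : ℝ) (m s : ℕ) :
    binomPMF p (m + 1) (s + 1)
      = (1 - p) * binomPMF p m (s + 1) + p * binomPMF p m s := by
  rcases le_or_gt (s+1) m with h | h
  · unfold binomPMF
    rw [Nat.choose_succ_succ]
    push_cast
    have e2 : m - s = m - (s + 1) + 1 := by omega
    rw [e2]
    ring
  · rcases Nat.eq_or_lt_of_le h with h' | h'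
    · have hsm : s = m := by omega
      subst hsm
      unfold binomPMF
      simp [Nat.choose_self, Nat.choose_succ_self]
      ring
    · rw [binomPMF_eq_zero (by omega), binomPMF_eq_zero (by omega),
        binomPMF_eq_zero (by omega)]
      ring

lemma binomPMF_zero (p : ℝ) (m : ℕ) :
    binomPMF p (m + 1) 0 = (1 - p) * binomPMF p m 0 := by
  unfold binomPMF
  simp [pow_succ]
  ring

/-- Ratio identity: b(s+1)·(s+1)·(1−p) = b(s)·(m−s)·p, for s ≤ m. -/
lemma binomPMF_ratio (p : ℝ) {m s : ℕ} (hs : s ≤ m) :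
    binomPMF p m (s+1) * ((s:ℝ)+1) * (1-p) = binomPMF p m s * ((m:ℝ) - s) * p := by
  rcases Nat.eq_or_lt_of_le hs with h | h
  · subst h
    rw [binomPMF_eq_zero (by omega)]
    simp
  · unfold binomPMF
    have hc : ((m.choose (s+1) : ℝ)) * ((s:ℝ)+1) = (m.choose s : ℝ) * ((m:ℝ) - s) := by
      have := Nat.choose_succ_right_eq m s
      have h2 := congrArg (fun n : ℕ => (n:ℝ)) this
      push_cast [Nat.cast_sub (le_of_lt h)] at h2
      push_cast
      linarith [h2]
    have e1 : m - s = m - (s + 1) + 1 := by omega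
    rw [e1]
    simp only [Nat.succ_sub_succ, pow_succ]
    linear_combination (p ^ s * p * (1-p) ^ (m - (s+1)) * (1-p)) * hc

/-- Pure algebra: the inductive step of the downward walk. -/
lemma decay_step (M B B1 K t : ℝ) (hM0 : 0 < M) (hBn : 0 ≤ B) (hB1n : 0 ≤ B1)
    (hBM : B ≤ M) (ht : 0 ≤ t) (hKT : t^2 + 2*t + (t+1) ≤ K)
    (hkey : B * (K - (t+1)) ≤ B1 * (K + t + 2))
    (ih : M * (K - (t^2 + 2*t)) ≤ B * K) :
    M * (K - ((t+1)^2 + 2*(t+1))) ≤ B1 * K := by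
  have hK0 : 0 < K := by nlinarith
  have hKt : (0:ℝ) < K + t + 2 := by linarith
  have hKt1 : (0:ℝ) ≤ K - (t+1) := by nlinarith
  have step1 : (B * K) * (K - (t+1)) ≤ (B1 * (K + t + 2)) * K :=
    by nlinarith [mul_le_mul_of_nonneg_right hkey (le_of_lt hK0)]
  have step2 : (M * (K - (t^2+2*t))) * (K - (t+1)) ≤ (B * K) * (K - (t+1)) :=
    mul_le_mul_of_nonneg_right ih hKt1
  have expand : M * (K - ((t+1)^2 + 2*(t+1))) * (K + t + 2)
      ≤ (M * (K - (t^2+2*t))) * (K - (t+1)) := by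
    nlinarith [mul_nonneg (mul_nonneg hM0.le (mul_nonneg ht ht)) ht,
      mul_nonneg hM0.le (mul_nonneg ht ht), mul_nonneg hM0.le ht, hM0.le]
  have : M * (K - ((t+1)^2 + 2*(t+1))) * (K + t + 2) ≤ (B1 * K) * (K + t + 2) := by
    calc M * (K - ((t+1)^2 + 2*(t+1))) * (K + t + 2)
        ≤ (M * (K - (t^2+2*t))) * (K - (t+1)) := expand
      _ ≤ (B * K) * (K - (t+1)) := step2
      _ ≤ (B1 * (K + t + 2)) * K := step1
      _ = (B1 * K) * (K + t + 2) := by ring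
  exact le_of_mul_le_mul_right this hKt

set_option maxHeartbeats 1000000 in
/-- Uniform decay of the binomial pmf. -/
lemma binomPMF_decay {p : ℝ} (h0 : 0 < p) (h1 : p < 1) {ε : ℝ} (hε : 0 < ε) :
    ∃ m0 : ℕ, ∀ m, m0 ≤ m → ∀ s, binomPMF p m s ≤ ε := by
  have hq0 : (0:ℝ) < 1 - p := by linarith
  obtain ⟨T, hT⟩ := exists_nat_ge (2 / ε)
  obtain ⟨m0, hm0⟩ := exists_nat_ge
    (max ((2*((T:ℝ)^2+2*T+2))/(p*(1-p))) (((T:ℝ)+2)/p))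
  refine ⟨m0, fun m hm s => ?_⟩
  have hmR : (max ((2*((T:ℝ)^2+2*T+2))/(p*(1-p))) (((T:ℝ)+2)/p)) ≤ (m:ℝ) :=
    le_trans hm0 (by exact_mod_cast hm)
  have hKb : 2*((T:ℝ)^2+2*T+2) ≤ (m:ℝ) * p * (1-p) := by
    have h := le_trans (le_max_left _ _) hmR
    rw [div_le_iff₀ (by positivity)] at h
    nlinarith [h]
  have hmp : (T:ℝ) + 2 ≤ (m:ℝ) * p := by
    have h := le_trans (le_max_right _ _) hmR
    rw [div_le_iff₀ h0] at h
    linarith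
  have hK0 : (0:ℝ) < (m:ℝ) * p * (1-p) := by nlinarith [hKb]
  -- the max of the pmf over range (m+1)
  obtain ⟨sm, hsmmem, hsmax⟩ := Finset.exists_max_image (range (m+1)) (binomPMF p m)
    ⟨0, Finset.mem_range.2 (by omega)⟩
  have hsmm : sm ≤ m := by have := Finset.mem_range.1 hsmmem; omega
  have hMmax : ∀ u, binomPMF p m u ≤ binomPMF p m sm := by
    intro u
    rcases le_or_gt u m with hu | hu
    · exact hsmax u (Finset.mem_range.2 (by omega))
    · rw [binomPMF_eq_zero hu]
      exact binomPMF_nonneg h0.le h1.le m sm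
  have hM0 : 0 < binomPMF p m sm :=
    lt_of_lt_of_le (binomPMF_pos h0 h1 (Nat.zero_le m)) (hMmax 0)
  -- the mode is ≥ mp − (1−p)
  have hmode : (m:ℝ) * p - (1-p) ≤ (sm:ℝ) := by
    have hr := binomPMF_ratio p hsmm
    have hb1 : binomPMF p m (sm+1) ≤ binomPMF p m sm := hMmax _
    have h2 : binomPMF p m sm * (((m:ℝ) - sm) * p)
        ≤ binomPMF p m sm * ((((sm:ℝ)+1) * (1-p))) := by
      calc binomPMF p m sm * (((m:ℝ) - sm) * p)
          = binomPMF p m (sm+1) * ((sm:ℝ)+1) * (1-p) := by linear_combination -hr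
        _ ≤ binomPMF p m sm * ((((sm:ℝ)+1) * (1-p))) := by
            have hnn : (0:ℝ) ≤ ((sm:ℝ)+1) * (1-p) := by positivity
            nlinarith [mul_le_mul_of_nonneg_right hb1 hnn]
    have h3 : ((m:ℝ) - sm) * p ≤ ((sm:ℝ)+1) * (1-p) :=
      le_of_mul_le_mul_left (by linarith [h2]) hM0
    nlinarith [h3]
  have hsmT : T + 1 ≤ sm := by
    have h5 : ((T:ℝ)) + 1 ≤ (sm:ℝ) := by nlinarith [hmode, hmp, hq0, h1]
    have := Nat.cast_le (α := ℝ) (n := sm) (m := T+1)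
    exact this.1 (by push_cast; linarith)
  -- downward induction claim
  have claim : ∀ t, t ≤ T →
      binomPMF p m sm * ((m:ℝ)*p*(1-p) - ((t:ℝ)^2 + 2*t))
        ≤ binomPMF p m (sm - t) * ((m:ℝ)*p*(1-p)) := by
    intro t
    induction t with
    | zero =>
      intro _
      simp only [Nat.sub_zero, Nat.cast_zero]
      nlinarith [hM0, hK0]
    | succ t ih =>
      intro htT
      have ihh := ih (by omega)
      have ht' : (t:ℝ) + 1 ≤ (T:ℝ) := by exact_mod_cast Nat.cast_le.2 htT
      have htn : (0:ℝ) ≤ (t:ℝ) := Nat.cast_nonneg t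
      set s : ℕ := sm - t with hs
      have hs1 : 1 ≤ s := by omega
      have hsm' : s ≤ m := by omega
      have hnext : sm - (t+1) = s - 1 := by omega
      rw [hnext]
      have hr := binomPMF_ratio p (show s - 1 ≤ m by omega)
      have hsr : ((s - 1 : ℕ):ℝ) = (s:ℝ) - 1 := by
        rw [Nat.cast_sub hs1]; push_cast; ring
      rw [hsr] at hr
      rw [show s - 1 + 1 = s by omega] at hr
      -- hr : b(s) * s * (1-p) = b(s-1) * (m - (s-1)) * p = b(s-1) * (m - s + 1) * p
      have hsR : ((s:ℝ)) = (sm:ℝ) - t := by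
        rw [hs, Nat.cast_sub (by omega)]
      have hBn : 0 ≤ binomPMF p m s := binomPMF_nonneg h0.le h1.le m s
      have hB1n : 0 ≤ binomPMF p m (s-1) := binomPMF_nonneg h0.le h1.le m _
      have hBM : binomPMF p m s ≤ binomPMF p m sm := hMmax s
      -- lower bound on s * (1-p)
      have hdown : (m:ℝ)*p*(1-p) - ((t:ℝ)+1) ≤ (s:ℝ) * (1-p) := by
        have hlb : (m:ℝ)*p - (1-p) - t ≤ (s:ℝ) := by rw [hsR]; linarith [hmode]
        nlinarith [mul_le_mul_of_nonneg_right hlb hq0.le, hq0, h1, htn, h0]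
      -- upper bound on (m - s + 1) * p
      have hup : ((m:ℝ) - ((s:ℝ) - 1)) * p ≤ (m:ℝ)*p*(1-p) + (t:ℝ) + 2 := by
        have hlb : (m:ℝ)*p - (1-p) - t ≤ (s:ℝ) := by rw [hsR]; linarith [hmode]
        nlinarith [mul_le_mul_of_nonneg_right hlb h0.le, h0, h1, htn, hq0]
      have hkey : binomPMF p m s * ((m:ℝ)*p*(1-p) - ((t:ℝ)+1))
          ≤ binomPMF p m (s-1) * ((m:ℝ)*p*(1-p) + (t:ℝ) + 2) := by
        calc binomPMF p m s * ((m:ℝ)*p*(1-p) - ((t:ℝ)+1))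
            ≤ binomPMF p m s * ((s:ℝ) * (1-p)) :=
              mul_le_mul_of_nonneg_left hdown hBn
          _ = binomPMF p m (s-1) * (((m:ℝ) - ((s:ℝ)-1)) * p) := by
              linear_combination hr
          _ ≤ binomPMF p m (s-1) * ((m:ℝ)*p*(1-p) + (t:ℝ) + 2) :=
              mul_le_mul_of_nonneg_left hup hB1n
      have hKT : (t:ℝ)^2 + 2*t + ((t:ℝ)+1) ≤ (m:ℝ)*p*(1-p) := by nlinarith [hKb, ht', htn]
      have := decay_step (binomPMF p m sm) (binomPMF p m s) (binomPMF p m (s-1))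
        ((m:ℝ)*p*(1-p)) (t:ℝ) hM0 hBn hB1n hBM htn hKT hkey ihh
      convert this using 2 <;> push_cast <;> ring
  -- each of the T+1 values is ≥ M/2
  have hhalf : ∀ t, t ≤ T → binomPMF p m sm / 2 ≤ binomPMF p m (sm - t) := by
    intro t ht
    have h := claim t ht
    have ht' : (t:ℝ) ≤ (T:ℝ) := by exact_mod_cast Nat.cast_le.2 ht
    have htn : (0:ℝ) ≤ (t:ℝ) := Nat.cast_nonneg t
    have h2 : binomPMF p m sm * ((m:ℝ)*p*(1-p)/2)
        ≤ binomPMF p m (sm - t) * ((m:ℝ)*p*(1-p)) := by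
      calc binomPMF p m sm * ((m:ℝ)*p*(1-p)/2)
          ≤ binomPMF p m sm * ((m:ℝ)*p*(1-p) - ((t:ℝ)^2 + 2*t)) := by
            apply mul_le_mul_of_nonneg_left _ hM0.le
            nlinarith [hKb, ht', htn]
        _ ≤ binomPMF p m (sm - t) * ((m:ℝ)*p*(1-p)) := h
    nlinarith [hK0, h2]
  -- sum bound
  have hsum : ((T:ℝ)+1) * (binomPMF p m sm / 2) ≤ 1 := by
    have hinj : ∀ a ∈ range (T+1), ∀ b ∈ range (T+1),
        sm - a = sm - b → a = b := by
      intro a ha b hb hab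
      have := Finset.mem_range.1 ha
      have := Finset.mem_range.1 hb
      omega
    have hsub : Finset.image (fun t => sm - t) (range (T+1)) ⊆ range (m+1) := by
      intro u hu
      obtain ⟨t, _, rfl⟩ := Finset.mem_image.1 hu
      exact Finset.mem_range.2 (by omega)
    calc ((T:ℝ)+1) * (binomPMF p m sm/2) = ∑ _t ∈ range (T+1), binomPMF p m sm/2 := by
          rw [Finset.sum_const, Finset.card_range]; push_cast; ring
      _ ≤ ∑ t ∈ range (T+1), binomPMF p m (sm - t) :=
          Finset.sum_le_sum (fun t ht => hhalf t (Nat.lt_succ_iff.1 (Finset.mem_range.1 ht)))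
      _ = ∑ u ∈ Finset.image (fun t => sm - t) (range (T+1)), binomPMF p m u :=
          (Finset.sum_image hinj).symm
      _ ≤ ∑ u ∈ range (m+1), binomPMF p m u :=
          Finset.sum_le_sum_of_subset_of_nonneg hsub
            (fun u _ _ => binomPMF_nonneg h0.le h1.le m u)
      _ = 1 := binomPMF_sum p m
  have hTe : 2 ≤ ε * ((T:ℝ)+1) := by
    rw [div_le_iff₀ hε] at hT
    nlinarith [hT, hε]
  have hMε : binomPMF p m sm ≤ ε := by
    nlinarith [hsum, hTe, hM0, hε, Nat.cast_nonneg (α := ℝ) T]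
  exact le_trans (hMmax s) hMε

section Joint
variable {k : ℕ} (p : Fin k → ℝ)

/-- Peeling off coordinate `i`. -/
lemma jointExp_peel (x : Fin k → ℕ) (i : Fin k) (g : (Fin k → ℕ) → ℝ) :
    jointExp p x g = ∑ t ∈ range (x i + 1), binomPMF (p i) (x i) t *
      jointExp p (Function.update x i 0) (fun a => g (Function.update a i t)) := by
  unfold jointExp
  simp only [Finset.mul_sum]
  rw [← Finset.sum_product']
  apply Finset.sum_nbij' (i := fun a => (a i, Function.update a i 0))
    (j := fun q => Function.update q.2 i q.1)
  · intro a ha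
    rw [Fintype.mem_piFinset] at ha
    refine Finset.mem_product.2 ⟨Finset.mem_range.2 ?_, ?_⟩
    · have := Finset.mem_range.1 (ha i); omega
    · rw [Fintype.mem_piFinset]
      intro j
      by_cases h : j = i
      · subst h; simp [Function.update_self]
      · simp [Function.update_of_ne h, ha j]
  · intro q hq
    rw [Finset.mem_product] at hq
    rw [Fintype.mem_piFinset]
    intro j
    by_cases h : j = i
    · subst h; simpa [Function.update_self] using hq.1
    · have := Fintype.mem_piFinset.1 hq.2 j
      simpa [Function.update_of_ne h] using this
  · intro a ha
    funext j
    by_cases h : j = i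
    · subst h; simp [Function.update_self]
    · simp [Function.update_of_ne h]
  · intro q hq
    rw [Finset.mem_product] at hq
    have h2 : (Function.update q.2 i q.1) i = q.1 := Function.update_self _ _ _
    have h0 : q.2 i = 0 := by
      have := Fintype.mem_piFinset.1 hq.2 i
      simpa [Function.update_self] using this
    apply Prod.ext
    · simpa using h2
    · simp only
      funext j
      by_cases h : j = i
      · subst h; simp [Function.update_self, h0]
      · simp [Function.update_of_ne h]
  · intro a ha
    rw [Fintype.mem_piFinset] at ha
    have hg : Function.update (Function.update a i 0) i (a i) = a := by
      funext j
      by_cases h : j = i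
      · subst h; simp
      · simp [Function.update_of_ne h]
    have hprod : (∏ j, binomPMF (p j) (x j) (a j))
        = binomPMF (p i) (x i) (a i) *
          ∏ j, binomPMF (p j) (Function.update x i 0 j) (Function.update a i 0 j) := by
      rw [Finset.prod_eq_mul_prod_sdiff_singleton_of_mem (Finset.mem_univ i)
        (fun j => binomPMF (p j) (x j) (a j)),
        Finset.prod_eq_mul_prod_sdiff_singleton_of_mem (Finset.mem_univ i)
        (fun j => binomPMF (p j) ((Function.update x i 0) j) ((Function.update a i 0) j))]
      simp only [Function.update_self]
      rw [show binomPMF (p i) 0 0 = 1 by unfold binomPMF; simp]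
      rw [one_mul]
      congr 1
      apply Finset.prod_congr rfl
      intro j hj
      have h : j ≠ i := by
        intro h; subst h; simp at hj
      simp [Function.update_of_ne h]
    simp only
    rw [hprod, hg]
    ring
end Joint

lemma binom_conv (pi : ℝ) (m : ℕ) (Q : ℕ → ℝ) :
    ∑ t ∈ range (m+2), binomPMF pi (m+1) t * Q t
      = (1 - pi) * ∑ t ∈ range (m+1), binomPMF pi m t * Q t
        + pi * ∑ t ∈ range (m+1), binomPMF pi m t * Q (t+1) := by
  have e1 : ∑ t ∈ range (m+2), binomPMF pi (m+1) t * Q t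
      = ∑ t ∈ range (m+1), binomPMF pi (m+1) (t+1) * Q (t+1) + binomPMF pi (m+1) 0 * Q 0 :=
    Finset.sum_range_succ' _ (m+1)
  have e2 : ∑ t ∈ range (m+2), binomPMF pi m t * Q t
      = ∑ t ∈ range (m+1), binomPMF pi m (t+1) * Q (t+1) + binomPMF pi m 0 * Q 0 :=
    Finset.sum_range_succ' _ (m+1)
  have e3 : ∑ t ∈ range (m+2), binomPMF pi m t * Q t
      = ∑ t ∈ range (m+1), binomPMF pi m t * Q t := by
    rw [Finset.sum_range_succ, binomPMF_eq_zero (show m < m + 1 by omega)]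
    ring
  have eAll : ∑ t ∈ range (m+1), binomPMF pi m t * Q t
      = ∑ t ∈ range (m+1), binomPMF pi m (t+1) * Q (t+1) + binomPMF pi m 0 * Q 0 :=
    e3.symm.trans e2
  have key : ∑ t ∈ range (m+1), binomPMF pi (m+1) (t+1) * Q (t+1)
      = (1 - pi) * (∑ t ∈ range (m+1), binomPMF pi m (t+1) * Q (t+1))
        + pi * ∑ t ∈ range (m+1), binomPMF pi m t * Q (t+1) := by
    rw [Finset.mul_sum, Finset.mul_sum, ← Finset.sum_add_distrib]
    refine Finset.sum_congr rfl (fun t _ => ?_)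
    rw [binomPMF_pascal]
    ring
  rw [e1, key, eAll, binomPMF_zero]
  ring

section Joint2
variable {k : ℕ} (p : Fin k → ℝ)

/-- Adding one Bernoulli trial at coordinate `i`. -/
lemma jointExp_succ (x : Fin k → ℕ) (i : Fin k) (m : ℕ) (g : (Fin k → ℕ) → ℝ) :
    jointExp p (Function.update x i (m+1)) g
      = (1 - p i) * jointExp p (Function.update x i m) g
        + p i * jointExp p (Function.update x i m)
            (fun a => g (Function.update a i (a i + 1))) := by
  have hx0 : Function.update (Function.update x i (m+1)) i 0 = Function.update x i 0 := by
    simp [Function.update_idem]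
  have hx0' : Function.update (Function.update x i m) i 0 = Function.update x i 0 := by
    simp [Function.update_idem]
  rw [jointExp_peel p (Function.update x i (m+1)) i g,
    jointExp_peel p (Function.update x i m) i g,
    jointExp_peel p (Function.update x i m) i (fun a => g (Function.update a i (a i + 1)))]
  simp only [Function.update_self, hx0, hx0']
  have hQ : ∀ t, (jointExp p (Function.update x i 0)
        (fun a => g (Function.update (Function.update a i t) i (t + 1))))
      = jointExp p (Function.update x i 0) (fun a => g (Function.update a i (t+1))) := by
    intro t
    apply Finset.sum_congr rfl
    intro a _
    simp only [Function.update_idem]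
  simp only [hQ]
  exact binom_conv (p i) m
    (fun t => jointExp p (Function.update x i 0) (fun a => g (Function.update a i t)))

/-- Constant 1 has expectation 1. -/
lemma jointExp_one (hp : ∀ j, 0 ≤ p j ∧ p j ≤ 1) (x : Fin k → ℕ) :
    jointExp p x (fun _ => 1) = 1 := by
  unfold jointExp
  simp only [mul_one]
  rw [← Finset.prod_univ_sum]
  rw [Finset.prod_eq_one]
  intro j _
  exact binomPMF_sum (p j) (x j)

lemma jointExp_mono (hp : ∀ j, 0 ≤ p j ∧ p j ≤ 1) (x : Fin k → ℕ)
    {g h : (Fin k → ℕ) → ℝ} (hgh : ∀ a, g a ≤ h a) :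
    jointExp p x g ≤ jointExp p x h := by
  apply Finset.sum_le_sum
  intro a _
  apply mul_le_mul_of_nonneg_left (hgh a)
  exact Finset.prod_nonneg (fun j _ => binomPMF_nonneg (hp j).1 (hp j).2 _ _)

lemma jointExp_congr (x : Fin k → ℕ) {g h : (Fin k → ℕ) → ℝ}
    (hgh : ∀ a, (∀ j, a j ≤ x j) → g a = h a) :
    jointExp p x g = jointExp p x h := by
  apply Finset.sum_congr rfl
  intro a ha
  rw [Fintype.mem_piFinset] at ha
  rw [hgh a (fun j => by have := Finset.mem_range.1 (ha j); omega)]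

lemma jointExp_add (x : Fin k → ℕ) (g h : (Fin k → ℕ) → ℝ) :
    jointExp p x (fun a => g a + h a) = jointExp p x g + jointExp p x h := by
  unfold jointExp
  rw [← Finset.sum_add_distrib]
  exact Finset.sum_congr rfl (fun a _ => by ring)

lemma jointExp_sum {ι : Type*} (x : Fin k → ℕ) (s : Finset ι) (G : ι → (Fin k → ℕ) → ℝ) :
    jointExp p x (fun a => ∑ t ∈ s, G t a) = ∑ t ∈ s, jointExp p x (G t) := by
  unfold jointExp
  rw [Finset.sum_comm]
  apply Finset.sum_congr rfl
  intro a _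
  rw [Finset.mul_sum]

end Joint2


open Classical in
noncomputable def indR (P : Prop) : ℝ := if P then 1 else 0

lemma indR_nonneg (P : Prop) : 0 ≤ indR P := by
  unfold indR; split_ifs <;> norm_num

lemma indR_le_one (P : Prop) : indR P ≤ 1 := by
  unfold indR; split_ifs <;> norm_num

lemma indR_true {P : Prop} (h : P) : indR P = 1 := by unfold indR; simp [h]
lemma indR_false {P : Prop} (h : ¬ P) : indR P = 0 := by unfold indR; simp [h]
lemma indR_congr {P Q : Prop} (h : P ↔ Q) : indR P = indR Q := by
  unfold indR
  classical
  exact if_congr h rfl rfl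
lemma indR_mono {P Q : Prop} (h : P → Q) : indR P ≤ indR Q := by
  unfold indR
  split_ifs with h1 h2 <;> first | exact absurd (h h1) h2 | norm_num

noncomputable def ptMass {k : ℕ} (p : Fin k → ℝ) (x : Fin k → ℕ) (s : ℕ) : ℝ :=
  jointProb p x (fun a => ∑ j, a j = s)

lemma jointProb_eq {k : ℕ} (p : Fin k → ℝ) (x : Fin k → ℕ) (E : (Fin k → ℕ) → Prop) :
    jointProb p x E = jointExp p x (fun a => indR (E a)) := rfl

section Joint3
variable {k : ℕ} (p : Fin k → ℝ)

lemma sum_update_succ (a : Fin k → ℕ) (i : Fin k) (c : ℕ) :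
    (∑ j, Function.update a i (a i + c) j) = (∑ j, a j) + c := by
  rw [Finset.sum_update_of_mem (Finset.mem_univ i)]
  rw [Finset.sum_eq_sum_sdiff_singleton_add (Finset.mem_univ i) a]
  ring

lemma sum_update_eq (a : Fin k → ℕ) (i : Fin k) (t : ℕ) :
    (∑ j, Function.update a i t j) = t + ∑ j ∈ Finset.univ \ {i}, a j := by
  rw [Finset.sum_update_of_mem (Finset.mem_univ i)]

lemma jointExp_zero (x : Fin k → ℕ) : jointExp p x (fun _ => 0) = 0 := by
  unfold jointExp; simp

variable (hp : ∀ j, 0 ≤ p j ∧ p j ≤ 1)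
include hp

lemma jointExp_nonneg (x : Fin k → ℕ) {g : (Fin k → ℕ) → ℝ} (hg : ∀ a, 0 ≤ g a) :
    0 ≤ jointExp p x g := by
  rw [← jointExp_zero p x]
  exact jointExp_mono p hp x hg

lemma jointProb_nonneg (x : Fin k → ℕ) (E : (Fin k → ℕ) → Prop) :
    0 ≤ jointProb p x E := by
  rw [jointProb_eq]
  exact jointExp_nonneg p hp x (fun a => indR_nonneg _)

lemma jointProb_le_one (x : Fin k → ℕ) (E : (Fin k → ℕ) → Prop) :
    jointProb p x E ≤ 1 := by
  rw [jointProb_eq, ← jointExp_one p hp x]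
  exact jointExp_mono p hp x (fun a => indR_le_one _)

end Joint3

section Joint4
variable {k : ℕ} (p : Fin k → ℝ)

lemma showTail_eq (x : Fin k → ℕ) (B : ℕ) :
    showTail p x B = jointExp p x (fun a => indR (B ≤ ∑ j, a j)) := rfl

lemma ptMass_eq (x : Fin k → ℕ) (s : ℕ) :
    ptMass p x s = jointExp p x (fun a => indR ((∑ j, a j) = s)) := rfl

noncomputable def Gv (B : ℕ) (s : ℕ) : ℝ := max ((s:ℝ) - B) 0

lemma VB_eq (B : ℕ) (x : Fin k → ℕ) :
    VB p B x = jointExp p x (fun a => Gv B (∑ j, a j)) := by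
  unfold VB Gv
  apply jointExp_congr
  intro a _
  congr 1
  push_cast
  ring

/-- One-step identity for expectations of functions of the sum. -/
lemma jointExp_sumfn_succ (w : Fin k → ℕ) (i : Fin k) (G : ℕ → ℝ) :
    jointExp p (Function.update w i (w i + 1)) (fun a => G (∑ j, a j))
      = jointExp p w (fun a => G (∑ j, a j))
        + p i * jointExp p w (fun a => G ((∑ j, a j) + 1) - G (∑ j, a j)) := by
  have h := jointExp_succ p w i (w i) (fun a => G (∑ j, a j))
  rw [Function.update_eq_self] at h
  rw [h]
  have h2 : jointExp p w (fun a => G (∑ j, Function.update a i (a i + 1) j))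
      = jointExp p w (fun a => G ((∑ j, a j) + 1)) := by
    apply jointExp_congr
    intro a _
    rw [sum_update_succ]
  rw [h2]
  have h3 : jointExp p w (fun a => G ((∑ j, a j) + 1) - G (∑ j, a j))
      = jointExp p w (fun a => G ((∑ j, a j) + 1)) - jointExp p w (fun a => G (∑ j, a j)) := by
    unfold jointExp
    rw [← Finset.sum_sub_distrib]
    exact Finset.sum_congr rfl (fun a _ => by ring)
  rw [h3]
  ring

lemma VB_succ (B : ℕ) (w : Fin k → ℕ) (i : Fin k) :
    VB p B (Function.update w i (w i + 1)) = VB p B w + p i * showTail p w B := by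
  rw [VB_eq, VB_eq, showTail_eq, jointExp_sumfn_succ]
  congr 1
  congr 1
  apply jointExp_congr
  intro a _
  set s := ∑ j, a j
  unfold Gv
  rcases le_or_gt B s with h | h
  · rw [indR_true h]
    rw [max_eq_left, max_eq_left]
    · push_cast; ring
    · have : (B:ℝ) ≤ s := by exact_mod_cast h
      linarith
    · have : (B:ℝ) ≤ s := by exact_mod_cast h
      push_cast; linarith
  · rw [indR_false (by omega)]
    rw [max_eq_right, max_eq_right]
    · ring
    · have : (s:ℝ) + 1 ≤ B := by exact_mod_cast h
      push_cast; linarith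
    · have : (s:ℝ) + 1 ≤ B := by exact_mod_cast h
      push_cast; linarith

lemma showTail_succ (b : ℕ) (w : Fin k → ℕ) (i : Fin k) :
    showTail p (Function.update w i (w i + 1)) (b+1)
      = showTail p w (b+1) + p i * ptMass p w b := by
  rw [showTail_eq, showTail_eq, ptMass_eq]
  rw [jointExp_sumfn_succ p w i (fun s => indR (b+1 ≤ s))]
  congr 1
  congr 1
  apply jointExp_congr
  intro a _
  set s := ∑ j, a j
  rcases Nat.lt_trichotomy s b with h | h | h
  · rw [indR_false (by omega), indR_false (by omega), indR_false (by omega)]; ring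
  · rw [indR_true (by omega), indR_false (by omega), indR_true (by omega)]; ring
  · rw [indR_true (by omega), indR_true (by omega), indR_false (by omega)]; ring

variable (hp : ∀ j, 0 ≤ p j ∧ p j ≤ 1)
include hp

lemma showTail_zero (x : Fin k → ℕ) : showTail p x 0 = 1 := by
  rw [showTail_eq]
  rw [jointExp_congr p x (h := fun _ => 1) (fun a _ => indR_true (Nat.zero_le _))]
  exact jointExp_one p hp x

lemma showTail_nonneg (x : Fin k → ℕ) (B : ℕ) : 0 ≤ showTail p x B :=
  jointProb_nonneg p hp x _

lemma showTail_le_one (x : Fin k → ℕ) (B : ℕ) : showTail p x B ≤ 1 :=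
  jointProb_le_one p hp x _

lemma ptMass_nonneg (x : Fin k → ℕ) (s : ℕ) : 0 ≤ ptMass p x s :=
  jointProb_nonneg p hp x _

omit hp in
lemma showTail_eq_zero (x : Fin k → ℕ) {B : ℕ} (hB : (∑ j, x j) < B) :
    showTail p x B = 0 := by
  rw [showTail_eq]
  rw [jointExp_congr p x (h := fun _ => 0) (fun a ha => indR_false (fun hle => ?_))]
  · exact jointExp_zero p x
  · have : (∑ j, a j) ≤ ∑ j, x j := Finset.sum_le_sum (fun j _ => ha j)
    omega

end Joint4

section Joint5
variable {k : ℕ} (p : Fin k → ℝ)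

lemma ptMass_succ (x : Fin k → ℕ) (i : Fin k) (m : ℕ) (s : ℕ) :
    ptMass p (Function.update x i (m+1)) s
      = (1 - p i) * ptMass p (Function.update x i m) s
        + p i * jointExp p (Function.update x i m)
            (fun a => indR ((∑ j, a j) + 1 = s)) := by
  rw [ptMass_eq, jointExp_succ, ← ptMass_eq]
  congr 2
  apply jointExp_congr
  intro a _
  rw [sum_update_succ]

lemma ptMass_pos_aux (hp : ∀ j, 0 < p j ∧ p j < 1) :
    ∀ (T : ℕ) (x : Fin k → ℕ) (s : ℕ), (∑ j, x j) = T → s ≤ T → 0 < ptMass p x s := by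
  have hp' : ∀ j, 0 ≤ p j ∧ p j ≤ 1 := fun j => ⟨(hp j).1.le, (hp j).2.le⟩
  intro T
  induction T with
  | zero =>
    intro x s hT hs
    have hx : ∀ j, x j = 0 := by
      intro j
      by_contra h
      have : 0 < ∑ l, x l := Finset.sum_pos' (fun l _ => Nat.zero_le _)
        ⟨j, Finset.mem_univ j, by omega⟩
      omega
    have hs0 : s = 0 := by omega
    subst hs0
    rw [ptMass_eq]
    rw [jointExp_congr p x (h := fun _ => 1) (fun a ha => indR_true ?_)]
    · rw [jointExp_one p hp']
      norm_num
    · apply Finset.sum_eq_zero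
      intro j _
      have := ha j
      rw [hx j] at this
      omega
  | succ T ih =>
    intro x s hT hs
    have hex : ∃ i, 0 < x i := by
      by_contra h
      push_neg at h
      have : (∑ j, x j) = 0 := Finset.sum_eq_zero (fun j _ => by have := h j; omega)
      omega
    obtain ⟨i, hi⟩ := hex
    have hxi : x = Function.update (Function.update x i (x i - 1)) i ((x i - 1) + 1) := by
      funext j
      by_cases h : j = i
      · subst h; simp [Function.update_self]; omega
      · simp [Function.update_of_ne h]
    have hxi' : Function.update (Function.update x i (x i - 1)) i (x i - 1)
        = Function.update x i (x i - 1) := by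
      simp [Function.update_idem]
    set x' := Function.update x i (x i - 1) with hx'
    have hsum' : (∑ j, x' j) = T := by
      have h1 : (∑ j, x' j) = (x i - 1) + ∑ j ∈ Finset.univ \ {i}, x j :=
        sum_update_eq x i (x i - 1)
      have h2 : (∑ j, x j) = x i + ∑ j ∈ Finset.univ \ {i}, x j := by
        rw [Finset.sum_eq_sum_sdiff_singleton_add (Finset.mem_univ i) x]; ring
      omega
    have key := ptMass_succ p x' i (x i - 1) s
    rw [hxi'] at key
    rw [hxi, key]
    have h1n : 0 ≤ ptMass p x' s := ptMass_nonneg p hp' x' s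
    have h2n : 0 ≤ jointExp p x' (fun a => indR ((∑ j, a j) + 1 = s)) :=
      jointExp_nonneg p hp' x' (fun a => indR_nonneg _)
    have hpi := hp i
    rcases le_or_gt s T with hsT | hsT
    · have := ih x' s hsum' hsT
      nlinarith
    · have hsT1 : s = T + 1 := by omega
      have : jointExp p x' (fun a => indR ((∑ j, a j) + 1 = s)) = ptMass p x' T := by
        rw [ptMass_eq]
        apply jointExp_congr
        intro a _
        exact indR_congr (by omega)
      rw [this]
      have := ih x' T hsum' (le_refl T)
      nlinarith

lemma ptMass_pos (hp : ∀ j, 0 < p j ∧ p j < 1) (x : Fin k → ℕ) {s : ℕ}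
    (hs : s ≤ ∑ j, x j) : 0 < ptMass p x s :=
  ptMass_pos_aux p hp (∑ j, x j) x s rfl hs

lemma ptMass_le_eps (hp : ∀ j, 0 ≤ p j ∧ p j ≤ 1) (x : Fin k → ℕ) (i : Fin k)
    {s : ℕ} {ε : ℝ} (hb : ∀ t, binomPMF (p i) (x i) t ≤ ε) :
    ptMass p x s ≤ ε := by
  have hε : 0 ≤ ε := le_trans (binomPMF_nonneg (hp i).1 (hp i).2 (x i) 0) (hb 0)
  rw [ptMass_eq, jointExp_peel p x i]
  set x0 := Function.update x i 0 with hx0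
  have hPt : ∀ t, jointExp p x0 (fun a => indR ((∑ j, Function.update a i t j) = s))
      = jointExp p x0 (fun a => indR (t + (∑ j ∈ Finset.univ \ {i}, a j) = s)) := by
    intro t
    apply jointExp_congr
    intro a _
    exact indR_congr (by rw [sum_update_eq])
  have hsum_le : (∑ t ∈ range (x i + 1),
      jointExp p x0 (fun a => indR (t + (∑ j ∈ Finset.univ \ {i}, a j) = s))) ≤ 1 := by
    rw [← jointExp_sum]
    rw [← jointExp_one p hp x0]
    apply jointExp_mono p hp x0
    intro a
    set r := ∑ j ∈ Finset.univ \ {i}, a j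
    calc (∑ t ∈ range (x i + 1), indR (t + r = s))
        ≤ ∑ t ∈ range (x i + 1), (if t = s - r then (1:ℝ) else 0) := by
          apply Finset.sum_le_sum
          intro t _
          by_cases h : t + r = s
          · rw [indR_true h, if_pos (by omega)]
          · rw [indR_false h]
            split_ifs <;> norm_num
      _ = (if s - r ∈ range (x i + 1) then (1:ℝ) else 0) := by
          rw [Finset.sum_ite_eq' (range (x i + 1)) (s - r) (fun _ => (1:ℝ))]
      _ ≤ 1 := by split_ifs <;> norm_num
  calc (∑ t ∈ range (x i + 1), binomPMF (p i) (x i) t *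
        jointExp p x0 (fun a => indR ((∑ j, Function.update a i t j) = s)))
      ≤ ∑ t ∈ range (x i + 1), ε *
        jointExp p x0 (fun a => indR (t + (∑ j ∈ Finset.univ \ {i}, a j) = s)) := by
        apply Finset.sum_le_sum
        intro t _
        rw [hPt t]
        apply mul_le_mul_of_nonneg_right (hb t)
        exact jointExp_nonneg p hp x0 (fun a => indR_nonneg _)
    _ = ε * ∑ t ∈ range (x i + 1),
        jointExp p x0 (fun a => indR (t + (∑ j ∈ Finset.univ \ {i}, a j) = s)) := by
        rw [Finset.mul_sum]
    _ ≤ ε * 1 := by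
        apply mul_le_mul_of_nonneg_left hsum_le hε
    _ = ε := mul_one ε

end Joint5


section PhaseC
variable {k : ℕ} (v p : Fin k → ℝ)

lemma obj_lin_update (y x : Fin k → ℕ) (i : Fin k) (c : ℕ) :
    (∑ l, v l * ((y l : ℝ) + ((Function.update x i c l : ℕ) : ℝ)))
      = (∑ l, v l * ((y l : ℝ) + (x l : ℝ))) + v i * ((c:ℝ) - (x i : ℝ)) := by
  have h : (fun l => v l * ((y l : ℝ) + ((Function.update x i c l : ℕ) : ℝ)))
      = Function.update (fun l => v l * ((y l : ℝ) + (x l : ℝ))) i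
          (v i * ((y i : ℝ) + (c : ℝ))) := by
    funext l
    by_cases hl : l = i
    · subst hl; simp [Function.update_self]
    · simp [Function.update_of_ne hl]
  rw [h, Finset.sum_update_of_mem (Finset.mem_univ i),
    Finset.sum_eq_sum_sdiff_singleton_add (Finset.mem_univ i)
      (fun l => v l * ((y l : ℝ) + (x l : ℝ)))]
  ring

/-- The three basic optimality inequalities plus the exchange identity. -/
lemma opt_facts (hp : ∀ j, 0 < p j ∧ p j < 1) (B : ℕ) (n y xs : Fin k → ℕ)
    (i j : Fin k) (hij : i ≠ j) (hfeas : Feasible n xs)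
    (hopt : ∀ x, Feasible n x → objFn v p B y x ≤ objFn v p B y xs)
    (hj1 : 1 ≤ xs j) (hi1 : xs i + 1 ≤ n i) :
    p j * showTail p (fun l => y l + Function.update xs j (xs j - 1) l) B ≤ v j ∧
    v i ≤ p i * showTail p (fun l => y l + xs l) B ∧
    objFn v p B y (Function.update (Function.update xs j (xs j - 1)) i (xs i + 1))
      = objFn v p B y xs + (v i - v j)
        - (p i - p j) * showTail p (fun l => y l + Function.update xs j (xs j - 1) l) B := by
  set xm := Function.update xs j (xs j - 1) with hxm
  have hxmj : xm j = xs j - 1 := Function.update_self _ _ _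
  have hxmi : xm i = xs i := Function.update_of_ne hij _ _
  set wm := fun l => y l + xm l with hwm
  have hw : (fun l => y l + xs l) = Function.update wm j (wm j + 1) := by
    funext l
    by_cases hl : l = j
    · subst hl
      simp only [hwm, Function.update_self, hxmj]
      omega
    · simp [hwm, Function.update_of_ne hl, hxm]
  have hVBw : VB p B (fun l => y l + xs l) = VB p B wm + p j * showTail p wm B := by
    rw [hw]; exact VB_succ p B wm j
  have hsub : ((xs j - 1 : ℕ) : ℝ) = (xs j : ℝ) - 1 := by
    rw [Nat.cast_sub hj1]; norm_num
  -- (a) removing one j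
  have ha : p j * showTail p wm B ≤ v j := by
    have h := hopt xm (by
      intro l
      by_cases hl : l = j
      · subst hl; rw [hxmj]; exact le_trans (Nat.sub_le _ _) (hfeas l)
      · rw [hxm, Function.update_of_ne hl]; exact hfeas l)
    unfold objFn at h
    rw [obj_lin_update v y xs j (xs j - 1), hsub] at h
    rw [hVBw] at h
    have : VB p B (fun l => y l + xm l) = VB p B wm := rfl
    rw [this] at h
    linarith
  -- (b) adding one i
  have hwplus : (fun l => y l + Function.update xs i (xs i + 1) l)
      = Function.update (fun l => y l + xs l) i ((fun l => y l + xs l) i + 1) := by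
    funext l
    by_cases hl : l = i
    · subst hl; simp only [Function.update_self]; omega
    · simp only [Function.update_of_ne hl]
  have hb : v i ≤ p i * showTail p (fun l => y l + xs l) B := by
    have h := hopt (Function.update xs i (xs i + 1)) (by
      intro l
      by_cases hl : l = i
      · subst hl; rw [Function.update_self]; exact hi1
      · rw [Function.update_of_ne hl]; exact hfeas l)
    unfold objFn at h
    rw [obj_lin_update v y xs i (xs i + 1)] at h
    rw [hwplus, VB_succ p B (fun l => y l + xs l) i] at h
    push_cast at h
    linarith
  -- (c) the exchange identity
  have hwx : (fun l => y l + Function.update xm i (xs i + 1) l)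
      = Function.update wm i (wm i + 1) := by
    funext l
    by_cases hl : l = i
    · subst hl; simp only [Function.update_self, hwm, hxmi]; omega
    · simp only [Function.update_of_ne hl, hwm]
  have hc : objFn v p B y (Function.update xm i (xs i + 1))
      = objFn v p B y xs + (v i - v j) - (p i - p j) * showTail p wm B := by
    unfold objFn
    rw [obj_lin_update v y xm i (xs i + 1), obj_lin_update v y xs j (xs j - 1), hsub]
    rw [hwx, VB_succ p B wm i]
    rw [hVBw]
    have : VB p B (fun l => y l + xm l) = VB p B wm := rfl
    rw [this, hxmi]
    push_cast
    ring
  exact ⟨ha, hb, hc⟩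

end PhaseC

lemma exists_R {pi pj : ℝ} (hpi : 0 < pi) (hpj : 0 < pj)
    (hri : ∃ q : ℚ, pi = (q : ℝ)) (hrj : ∃ q : ℚ, pj = (q : ℝ)) (m0 : ℕ) :
    ∃ R ri rj : ℕ, 0 < R ∧ (ri : ℝ) * pi = R ∧ (rj : ℝ) * pj = R ∧
      2 ≤ ri ∧ 2 ≤ rj ∧ m0 + 1 ≤ rj := by
  obtain ⟨qi, rfl⟩ := hri
  obtain ⟨qj, rfl⟩ := hrj
  have hqi0 : 0 < qi := by exact_mod_cast hpi
  have hqj0 : 0 < qj := by exact_mod_cast hpj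
  set ai := qi.num.toNat with hai
  set aj := qj.num.toNat with haj
  have hain : (ai : ℤ) = qi.num := Int.toNat_of_nonneg (Rat.num_pos.2 hqi0).le
  have hajn : (aj : ℤ) = qj.num := Int.toNat_of_nonneg (Rat.num_pos.2 hqj0).le
  have hai0 : 0 < ai := by have := Rat.num_pos.2 hqi0; omega
  have haj0 : 0 < aj := by have := Rat.num_pos.2 hqj0; omega
  have hd1 : ((qi.den:ℚ)) ≠ 0 := by exact_mod_cast qi.den_pos.ne'
  have hd2 : ((qj.den:ℚ)) ≠ 0 := by exact_mod_cast qj.den_pos.ne'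
  have h1 : ((qi.num:ℚ)) = qi * (qi.den:ℚ) := by
    have h := Rat.num_div_den qi
    rw [div_eq_iff hd1] at h
    exact h.symm ▸ rfl
  have h2 : ((qj.num:ℚ)) = qj * (qj.den:ℚ) := by
    have h := Rat.num_div_den qj
    rw [div_eq_iff hd2] at h
    exact h.symm ▸ rfl
  set t := m0 + 2 with htdef
  refine ⟨ai * aj * t, aj * qi.den * t, ai * qj.den * t, ?_, ?_, ?_, ?_, ?_, ?_⟩
  · positivity
  · have key : ((aj * qi.den * t : ℕ) : ℚ) * qi = ((ai * aj * t : ℕ) : ℚ) := by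
      push_cast
      have hA : ((ai:ℚ)) = ((qi.num : ℤ) : ℚ) := by exact_mod_cast congrArg (fun z : ℤ => (z:ℚ)) hain
      rw [hA]
      push_cast [h1]
      ring
    calc ((aj * qi.den * t : ℕ) : ℝ) * ((qi : ℚ) : ℝ)
        = (((aj * qi.den * t : ℕ) : ℚ) * qi : ℚ) := by push_cast; ring
      _ = ((ai * aj * t : ℕ) : ℝ) := by rw [key]; push_cast; ring
  · have key : ((ai * qj.den * t : ℕ) : ℚ) * qj = ((ai * aj * t : ℕ) : ℚ) := by
      push_cast
      have hA : ((aj:ℚ)) = ((qj.num : ℤ) : ℚ) := by exact_mod_cast congrArg (fun z : ℤ => (z:ℚ)) hajn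
      rw [hA]
      push_cast [h2]
      ring
    calc ((ai * qj.den * t : ℕ) : ℝ) * ((qj : ℚ) : ℝ)
        = (((ai * qj.den * t : ℕ) : ℚ) * qj : ℚ) := by push_cast; ring
      _ = ((ai * aj * t : ℕ) : ℝ) := by rw [key]; push_cast; ring
  · have := qi.den_pos
    have : 1 ≤ aj * qi.den := Nat.one_le_iff_ne_zero.2 (by positivity)
    nlinarith [this]
  · have : 1 ≤ ai * qj.den := Nat.one_le_iff_ne_zero.2 (by positivity)
    nlinarith [this]
  · have : 1 ≤ ai * qj.den := Nat.one_le_iff_ne_zero.2 (by positivity)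
    nlinarith [this]


set_option maxHeartbeats 1000000 in
/-- **Lemma 5 (optimal solutions are nearly index solutions).**  For `i < j` there
is a positive integer `R_{ij}` (depending only on `v`, `p`) with `R_{ij} / p i`
and `R_{ij} / p j` integers (`ri`, `rj`), such that for every `B`, bounds `n`,
past counts `y`, and optimal solution `xs` of the offline problem, either
`xs i > n i − ri` or `xs j < rj`. -/
theorem near_index_structure {k : ℕ} (v p : Fin k → ℝ)
    (hk : 1 ≤ k)
    (hp : ∀ j, 0 < p j ∧ p j < 1)
    (hrat : ∀ j, ∃ q : ℚ, p j = (q : ℝ))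
    (hv : ∀ j, 0 < v j ∧ v j < p j)
    (hord : ∀ i j : Fin k, i ≤ j → v j / p j ≤ v i / p i)
    (htie : ∀ i j : Fin k, i < j → v i / p i = v j / p j → v j < v i ∧ p j < p i)
    (i j : Fin k) (hij : i < j) :
    ∃ R ri rj : ℕ, 0 < R ∧ (ri : ℝ) * p i = R ∧ (rj : ℝ) * p j = R ∧
      ∀ (B : ℕ) (n y xs : Fin k → ℕ),
        Feasible n xs →
        (∀ x, Feasible n x → objFn v p B y x ≤ objFn v p B y xs) →
        ((n i : ℤ) - (ri : ℤ) < (xs i : ℤ) ∨ xs j < rj) := by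
  have hp' : ∀ l, 0 ≤ p l ∧ p l ≤ 1 := fun l => ⟨(hp l).1.le, (hp l).2.le⟩
  have hij' : i ≠ j := Fin.ne_of_lt hij
  have hpj0 := (hp j).1
  have hpi0 := (hp i).1
  have hqj1 : v j / p j < 1 := by rw [div_lt_one hpj0]; exact (hv j).2
  have hqj0 : 0 < v j / p j := div_pos (hv j).1 hpj0
  have horder : v j / p j ≤ v i / p i := hord i j hij.le
  rcases eq_or_lt_of_le horder with hqeq | hqlt
  · -- === tie case ===
    obtain ⟨hvij, hpij⟩ := htie i j hij hqeq.symm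
    obtain ⟨R, ri, rj, hR0, hRi, hRj, hri2, hrj2, _⟩ :=
      exists_R hpi0 hpj0 (hrat i) (hrat j) 0
    refine ⟨R, ri, rj, hR0, hRi, hRj, ?_⟩
    intro B n y xs hfeas hopt
    by_contra hcon
    push_neg at hcon
    obtain ⟨h1, h2⟩ := hcon
    have hni : xs i + ri ≤ n i := by omega
    have hj1 : 1 ≤ xs j := by omega
    have hi1 : xs i + 1 ≤ n i := by omega
    obtain ⟨ha, hb, hc⟩ := opt_facts v p hp B n y xs i j hij' hfeas hopt hj1 hi1
    set xm := Function.update xs j (xs j - 1) with hxm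
    set wm := fun l => y l + xm l with hwm
    set t := showTail p wm B with ht
    set q := v j / p j with hqdef
    have hvj : v j = q * p j := by rw [hqdef]; field_simp
    have hvi : v i = q * p i := by rw [hqeq]; field_simp
    have htq : t ≤ q := by nlinarith [ha]
    have hxfeas : Feasible n (Function.update xm i (xs i + 1)) := by
      intro l
      by_cases hl : l = i
      · subst hl; rw [Function.update_self]; exact hi1
      · rw [Function.update_of_ne hl]
        by_cases hl2 : l = j
        · subst hl2; rw [hxm, Function.update_self]
          exact le_trans (Nat.sub_le _ _) (hfeas l)
        · rw [hxm, Function.update_of_ne hl2]; exact hfeas l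
    have hcle := hopt _ hxfeas
    rw [hc] at hcle
    have hqt : q ≤ t := by nlinarith [hcle, hpij]
    have hteq : t = q := le_antisymm htq hqt
    rcases Nat.eq_zero_or_pos B with hB0 | hBpos
    · subst hB0
      rw [ht, showTail_zero p hp' wm] at hteq
      linarith [hqj1]
    obtain ⟨b, rfl⟩ : ∃ b, B = b + 1 := ⟨B - 1, by omega⟩
    -- the exchanged solution is also optimal
    set xs' := Function.update xm i (xs i + 1) with hxs'
    have hobj_eq : objFn v p (b+1) y xs' = objFn v p (b+1) y xs := by
      rw [hc, hteq, hvi, hvj]; ring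
    have hopt' : ∀ x, Feasible n x → objFn v p (b+1) y x ≤ objFn v p (b+1) y xs' :=
      fun x hx => (hopt x hx).trans_eq hobj_eq.symm
    have hxs'j : xs' j = xs j - 1 := by
      rw [hxs', Function.update_of_ne (Ne.symm hij'), hxm, Function.update_self]
    have hxs'i : xs' i = xs i + 1 := by
      rw [hxs', Function.update_self]
    have hj1' : 1 ≤ xs' j := by omega
    have hi1' : xs' i + 1 ≤ n i := by omega
    obtain ⟨ha', hb', hc'⟩ := opt_facts v p hp (b+1) n y xs' i j hij' hxfeas hopt' hj1' hi1'
    set t' := showTail p (fun l => y l + Function.update xs' j (xs' j - 1) l) (b+1) with ht'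
    have ht'q : t' ≤ q := by nlinarith [ha']
    have hxfeas' : Feasible n
        (Function.update (Function.update xs' j (xs' j - 1)) i (xs' i + 1)) := by
      intro l
      by_cases hl : l = i
      · subst hl; rw [Function.update_self]; omega
      · rw [Function.update_of_ne hl]
        by_cases hl2 : l = j
        · subst hl2; rw [Function.update_self]
          have := hfeas l
          omega
        · rw [Function.update_of_ne hl2, hxs', Function.update_of_ne hl, hxm,
            Function.update_of_ne hl2]
          exact hfeas l
    have hcle' := hopt' _ hxfeas'
    rw [hc'] at hcle'
    have hqt' : q ≤ t' := by nlinarith [hcle', hpij]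
    have ht'eq : t' = q := le_antisymm ht'q hqt'
    -- compare the two configurations through the common base u
    set u := fun l => y l + Function.update xs j (xs j - 2) l with hu
    have hwmu : wm = Function.update u j (u j + 1) := by
      funext l
      by_cases hl : l = j
      · subst hl
        simp only [hwm, hxm, hu, Function.update_self]
        omega
      · simp only [hwm, hxm, hu, Function.update_of_ne hl]
    have hwm'u : (fun l => y l + Function.update xs' j (xs' j - 1) l)
        = Function.update u i (u i + 1) := by
      funext l
      by_cases hl : l = i
      · subst hl
        simp only [hu, Function.update_of_ne hij', Function.update_self, hxs'i]
        omega
      · by_cases hl2 : l = j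
        · subst hl2
          simp only [hu, Function.update_self, Function.update_of_ne (Ne.symm hij'),
            hxs'j]
          omega
        · simp only [hu, Function.update_of_ne hl, Function.update_of_ne hl2, hxs', hxm]
    have e1 : showTail p wm (b+1) = showTail p u (b+1) + p j * ptMass p u b := by
      rw [hwmu]; exact showTail_succ p b u j
    have e2 : showTail p (fun l => y l + Function.update xs' j (xs' j - 1) l) (b+1)
        = showTail p u (b+1) + p i * ptMass p u b := by
      rw [hwm'u]; exact showTail_succ p b u i
    have hmass : ptMass p u b = 0 := by
      have e1' := e1
      have e2' := e2
      rw [← ht] at e1'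
      rw [← ht'] at e2'
      have h3 : (p i - p j) * ptMass p u b = 0 := by linarith [hteq, ht'eq, e1', e2']
      rcases mul_eq_zero.1 h3 with h4 | h4
      · exfalso; linarith [hpij]
      · exact h4
    have hble : b ≤ ∑ l, u l := by
      by_contra hc2
      push_neg at hc2
      have hsumu : (∑ l, Function.update u j (u j + 1) l) = (∑ l, u l) + 1 :=
        sum_update_succ u j 1
      have hz : showTail p wm (b+1) = 0 := by
        apply showTail_eq_zero p
        rw [hwmu, hsumu]
        omega
      rw [← ht] at hz
      rw [hteq] at hz
      linarith [hqj0]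
    exact absurd hmass (ne_of_gt (ptMass_pos p hp u hble))
  · -- === strict case ===
    have hgap : 0 < (v i / p i - v j / p j) / (2 * p j) :=
      div_pos (by linarith) (by linarith)
    obtain ⟨m0, hm0⟩ := binomPMF_decay hpj0 (hp j).2 hgap
    obtain ⟨R, ri, rj, hR0, hRi, hRj, hri2, hrj2, hrjm0⟩ :=
      exists_R hpi0 hpj0 (hrat i) (hrat j) m0
    refine ⟨R, ri, rj, hR0, hRi, hRj, ?_⟩
    intro B n y xs hfeas hopt
    by_contra hcon
    push_neg at hcon
    obtain ⟨h1, h2⟩ := hcon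
    have hni : xs i + ri ≤ n i := by omega
    have hj1 : 1 ≤ xs j := by omega
    have hi1 : xs i + 1 ≤ n i := by omega
    obtain ⟨ha, hb, _⟩ := opt_facts v p hp B n y xs i j hij' hfeas hopt hj1 hi1
    set xm := Function.update xs j (xs j - 1) with hxm
    set wm := fun l => y l + xm l with hwm
    rcases Nat.eq_zero_or_pos B with hB0 | hBpos
    · subst hB0
      rw [showTail_zero p hp' wm] at ha
      linarith [(hv j).2]
    obtain ⟨b, rfl⟩ : ∃ b, B = b + 1 := ⟨B - 1, by omega⟩
    have hw : (fun l => y l + xs l) = Function.update wm j (wm j + 1) := by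
      funext l
      by_cases hl : l = j
      · subst hl
        simp only [hwm, hxm, Function.update_self]
        omega
      · simp only [hwm, hxm, Function.update_of_ne hl]
    have htau : showTail p (fun l => y l + xs l) (b+1)
        = showTail p wm (b+1) + p j * ptMass p wm b := by
      rw [hw]; exact showTail_succ p b wm j
    rw [htau] at hb
    have hwmj : wm j = y j + (xs j - 1) := by
      simp only [hwm, hxm, Function.update_self]
    have hM : ptMass p wm b ≤ (v i / p i - v j / p j) / (2 * p j) := by
      apply ptMass_le_eps p hp' wm j
      intro s
      apply hm0 (wm j) _ s
      rw [hwmj]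
      omega
    have hqi_le : v i / p i ≤ showTail p wm (b+1) + p j * ptMass p wm b := by
      rw [div_le_iff₀ hpi0]
      nlinarith [hb]
    have htle : showTail p wm (b+1) ≤ v j / p j := by
      rw [le_div_iff₀ hpj0]
      nlinarith [ha]
    have hpjM : p j * ptMass p wm b ≤ (v i / p i - v j / p j) / 2 := by
      have h5 := mul_le_mul_of_nonneg_left hM hpj0.le
      calc p j * ptMass p wm b ≤ p j * ((v i / p i - v j / p j) / (2 * p j)) := h5
        _ = (v i / p i - v j / p j) / 2 := by field_simp
    linarith [hqi_le, htle, hpjM, hqlt]
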